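/- Let γ be a gauge on ℝ^d (d ≥ 2). The unit ball {x : γ(x) ≤ 1} is smooth (each boundary point lies on a unique supporting hyperplane) if and only if for every x, y ∈ ℝ^d with x ≠ 0 there exists a unique α ∈ ℝ such that x ⊥_B (αx + y). -/

import Mathlib

open scoped RealInnerProductSpace

noncomputable section

variable {d : ℕ}

/-- A gauge on ℝ^d: nonnegative, vanishing only at 0, positively homogeneous, subadditive. -/
def IsGauge (γ : EuclideanSpace ℝ (Fin d) → ℝ) : Prop :=
  (∀ x, 0 ≤ γ x) ∧ (∀ x, γ x = 0 → x = 0) ∧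
  (∀ (x : EuclideanSpace ℝ (Fin d)) (l : ℝ), 0 < l → γ (l • x) = l * γ x) ∧
  (∀ x y, γ (x + y) ≤ γ x + γ y)

/-- The polar function of a gauge. -/
def polarGauge (γ : EuclideanSpace ℝ (Fin d) → ℝ) : EuclideanSpace ℝ (Fin d) → ℝ :=
  fun xs => sInf {l : ℝ | 0 < l ∧ ∀ x, ⟪xs, x⟫ ≤ l * γ x}

/-- The ε-subdifferential of f at x. -/
def epsSubdiff (f : EuclideanSpace ℝ (Fin d) → ℝ) (ε : ℝ) (x : EuclideanSpace ℝ (Fin d)) :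
    Set (EuclideanSpace ℝ (Fin d)) :=
  {xs | ∀ y, ⟪xs, y - x⟫ ≤ f y - f x + ε}

/-- ε-Birkhoff orthogonality: x ⊥_B^ε y iff γ x ≤ γ (x + λ y) + ε for all λ. -/
def BirkhoffEps (γ : EuclideanSpace ℝ (Fin d) → ℝ) (ε : ℝ)
    (x y : EuclideanSpace ℝ (Fin d)) : Prop :=
  ∀ l : ℝ, γ x ≤ γ (x + l • y) + ε

/-- The ε-directional derivative of f at x in direction y. -/
def epsDirDeriv (f : EuclideanSpace ℝ (Fin d) → ℝ) (ε : ℝ)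
    (x y : EuclideanSpace ℝ (Fin d)) : ℝ :=
  sInf {q : ℝ | ∃ l : ℝ, 0 < l ∧ q = (f (x + l • y) - f x + ε) / l}

/-!
A nonzero `x` is Birkhoff orthogonal to `z` exactly when some supporting functional of `γ` at `x`
(a linear `f ≤ γ` with `f x = γ x`) kills `z`: one direction is immediate, the other is the
Hahn–Banach extension of `a • x + b • z ↦ a * γ x`. For such a functional `f`,
`f (α • x + y) = α * γ x + f y` vanishes for exactly one `α`, so the `α` with `x ⊥_B (α • x + y)`
are unique for every `y` iff the supporting functional at `x` is unique, i.e. iff the unit ball has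
a unique supporting hyperplane at `x / γ x`.
-/

section HahnBanach

variable {E : Type*} [AddCommGroup E] [Module ℝ E] {γ : E → ℝ} {x z : E}

lemma map_zero_of_forall_smul (h_smul : ∀ (v : E) (c : ℝ), 0 < c → γ (c • v) = c * γ v) :
    γ 0 = 0 := by
  have h := h_smul 0 2 two_pos
  rw [smul_zero] at h
  linarith

lemma mul_le_map_smul_add_smul_of_forall_le_add_smul (h_nonneg : ∀ v, 0 ≤ γ v)
    (h_smul : ∀ (v : E) (c : ℝ), 0 < c → γ (c • v) = c * γ v)
    (hxz : ∀ l : ℝ, γ x ≤ γ (x + l • z)) (a b : ℝ) :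
    a * γ x ≤ γ (a • x + b • z) := by
  rcases le_or_gt a 0 with ha | ha
  · exact (mul_nonpos_of_nonpos_of_nonneg ha (h_nonneg x)).trans (h_nonneg _)
  · calc a * γ x ≤ a * γ (x + (b / a) • z) := by gcongr; exact hxz _
      _ = γ (a • x + b • z) := by
        rw [← h_smul _ _ ha, smul_add, smul_smul, mul_div_cancel₀ _ ha.ne']

theorem exists_linearMap_le_of_forall_le_add_smul (h_nonneg : ∀ v, 0 ≤ γ v)
    (h_smul : ∀ (v : E) (c : ℝ), 0 < c → γ (c • v) = c * γ v)
    (h_add : ∀ v w, γ (v + w) ≤ γ v + γ w) (hx : 0 < γ x)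
    (hxz : ∀ l : ℝ, γ x ≤ γ (x + l • z)) :
    ∃ g : E →ₗ[ℝ] ℝ, (∀ v, g v ≤ γ v) ∧ g x = γ x ∧ g z = 0 := by
  have hx_notMem : x ∉ ℝ ∙ z := by
    intro hxz_mem
    obtain ⟨c, rfl⟩ := Submodule.mem_span_singleton.1 hxz_mem
    have := hxz (-c)
    rw [neg_smul, add_neg_cancel, map_zero_of_forall_smul h_smul] at this
    linarith
  let f : E →ₗ.[ℝ] ℝ := LinearPMap.supSpanSingleton ⟨ℝ ∙ z, 0⟩ x (γ x) hx_notMem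
  obtain ⟨g, hgf, hgγ⟩ := exists_extension_of_le_sublinear f γ (fun c hc v => h_smul v c hc) h_add
    (by
      rintro ⟨_, hv⟩
      obtain ⟨_, hz, _, hx', rfl⟩ := Submodule.mem_sup.1 hv
      obtain ⟨a, rfl⟩ := Submodule.mem_span_singleton.1 hx'
      obtain ⟨b, rfl⟩ := Submodule.mem_span_singleton.1 hz
      rw [LinearPMap.supSpanSingleton_apply_mk _ _ _ _ _ hz]
      simpa [add_comm] using
        mul_le_map_smul_add_smul_of_forall_le_add_smul h_nonneg h_smul hxz a b)
  refine ⟨g, hgγ, ?_, ?_⟩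
  · exact (hgf ⟨x, _⟩).trans (LinearPMap.supSpanSingleton_apply_self _ _ _)
  · exact (hgf ⟨z, _⟩).trans
      (LinearPMap.supSpanSingleton_apply_mk_of_mem _ _ _ (Submodule.mem_span_singleton_self z))

end HahnBanach

section SupportingFunctional

variable {E : Type*} [NormedAddCommGroup E] [InnerProductSpace ℝ E]

/-- `w` stands for the functional `⟪w, ·⟫`; for a gauge these are the subgradients of `γ` at `x`. -/
def IsSupportingFunctional (γ : E → ℝ) (x w : E) : Prop :=
  (∀ v, ⟪w, v⟫ ≤ γ v) ∧ ⟪w, x⟫ = γ x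

def IsSupportingHyperplane (B : Set E) (x : E) (H : Set E) : Prop :=
  ∃ xs : E, xs ≠ 0 ∧ ∃ c : ℝ, H = {y | ⟪xs, y⟫ = c} ∧ ⟪xs, x⟫ = c ∧ ∀ z ∈ B, ⟪xs, z⟫ ≤ c

variable {γ : E → ℝ} {x w : E}

theorem exists_isSupportingFunctional_inner_eq_zero [FiniteDimensional ℝ E] {z : E}
    (h_nonneg : ∀ v, 0 ≤ γ v) (h_smul : ∀ (v : E) (c : ℝ), 0 < c → γ (c • v) = c * γ v)
    (h_add : ∀ v w, γ (v + w) ≤ γ v + γ w) (hx : 0 < γ x)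
    (hxz : ∀ l : ℝ, γ x ≤ γ (x + l • z)) :
    ∃ w, IsSupportingFunctional γ x w ∧ ⟪w, z⟫ = 0 := by
  obtain ⟨g, hgγ, hgx, hgz⟩ :=
    exists_linearMap_le_of_forall_le_add_smul h_nonneg h_smul h_add hx hxz
  have hw (v : E) : ⟪(InnerProductSpace.toDual ℝ E).symm g.toContinuousLinearMap, v⟫ = g v := by
    rw [InnerProductSpace.toDual_symm_apply, LinearMap.coe_toContinuousLinearMap']
  exact ⟨_, ⟨fun v => (hw v).trans_le (hgγ v), (hw x).trans hgx⟩, (hw z).trans hgz⟩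

namespace IsSupportingFunctional

lemma le_add_smul (hw : IsSupportingFunctional γ x w) {z : E} (hwz : ⟪w, z⟫ = 0) (l : ℝ) :
    γ x ≤ γ (x + l • z) := by
  simpa [inner_add_right, real_inner_smul_right, hwz, hw.2] using hw.1 (x + l • z)

lemma inner_smul_add_eq_zero_iff (hw : IsSupportingFunctional γ x w) (hx : γ x ≠ 0) (α : ℝ)
    (y : E) : ⟪w, α • x + y⟫ = 0 ↔ α = -⟪w, y⟫ / γ x := by
  rw [inner_add_right, real_inner_smul_right, hw.2, eq_div_iff hx]
  constructor <;> intro h <;> linarith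

end IsSupportingFunctional

lemma isSupportingFunctional_smul_iff
    (h_smul : ∀ (v : E) (c : ℝ), 0 < c → γ (c • v) = c * γ v) {c : ℝ} (hc : 0 < c) :
    IsSupportingFunctional γ (c • x) w ↔ IsSupportingFunctional γ x w := by
  simp only [IsSupportingFunctional, real_inner_smul_right, h_smul x c hc,
    mul_right_inj' hc.ne']

lemma eq_of_setOf_inner_eq_one_eq {a b : E} (ha : a ≠ 0)
    (h : {y | ⟪a, y⟫ = 1} = {y | ⟪b, y⟫ = 1}) : a = b := by
  have hmem (y : E) (hy : ⟪a, y⟫ = 1) : ⟪b, y⟫ = 1 := (Set.ext_iff.1 h y).1 hy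
  obtain ⟨u, hau⟩ : ∃ u, ⟪a, u⟫ = 1 := ⟨(⟪a, a⟫)⁻¹ • a, by
    rw [real_inner_smul_right, inv_mul_cancel₀ (inner_self_ne_zero.2 ha)]⟩
  have hbu := hmem u hau
  refine ext_inner_right ℝ fun v => ?_
  have := hmem (u + v - ⟪a, v⟫ • u) (by
    rw [inner_sub_right, inner_add_right, real_inner_smul_right, hau]; ring)
  rw [inner_sub_right, inner_add_right, real_inner_smul_right, hbu] at this
  linarith

end SupportingFunctional

namespace IsGauge

variable {γ : EuclideanSpace ℝ (Fin d) → ℝ} {x : EuclideanSpace ℝ (Fin d)}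

lemma map_zero (hγ : IsGauge γ) : γ 0 = 0 :=
  map_zero_of_forall_smul hγ.2.2.1

lemma pos_of_ne_zero (hγ : IsGauge γ) (hx : x ≠ 0) : 0 < γ x :=
  (hγ.1 x).lt_of_ne fun h => hx (hγ.2.1 x h.symm)

lemma map_inv_smul_self (hγ : IsGauge γ) (hx : x ≠ 0) : γ ((γ x)⁻¹ • x) = 1 := by
  have hpos := hγ.pos_of_ne_zero hx
  rw [hγ.2.2.1 x _ (inv_pos.2 hpos), inv_mul_cancel₀ hpos.ne']

lemma ne_zero_of_map_eq_one (hγ : IsGauge γ) (hx : γ x = 1) : x ≠ 0 := by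
  rintro rfl
  rw [hγ.map_zero] at hx
  exact zero_ne_one hx

lemma inner_le_mul_of_forall_le {xs : EuclideanSpace ℝ (Fin d)} {c : ℝ} (hγ : IsGauge γ)
    (h : ∀ z, γ z ≤ 1 → ⟪xs, z⟫ ≤ c) (v : EuclideanSpace ℝ (Fin d)) : ⟪xs, v⟫ ≤ c * γ v := by
  rcases eq_or_ne v 0 with rfl | hv
  · simp [hγ.map_zero]
  have hpos := hγ.pos_of_ne_zero hv
  have := h _ (hγ.map_inv_smul_self hv).le
  rw [real_inner_smul_right, inv_mul_le_iff₀ hpos] at this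
  linarith

theorem birkhoff_iff (hγ : IsGauge γ) (hx : x ≠ 0) {z : EuclideanSpace ℝ (Fin d)} :
    BirkhoffEps γ 0 x z ↔ ∃ w, IsSupportingFunctional γ x w ∧ ⟪w, z⟫ = 0 := by
  simp only [BirkhoffEps, add_zero]
  refine ⟨fun h => ?_, fun ⟨w, hw, hwz⟩ => hw.le_add_smul hwz⟩
  exact exists_isSupportingFunctional_inner_eq_zero hγ.1 hγ.2.2.1 hγ.2.2.2
    (hγ.pos_of_ne_zero hx) h

theorem existsUnique_isSupportingFunctional_iff (hγ : IsGauge γ) (hx : x ≠ 0) :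
    (∃! w, IsSupportingFunctional γ x w) ↔
      ∀ y, ∃! α : ℝ, BirkhoffEps γ 0 x (α • x + y) := by
  have hγx := (hγ.pos_of_ne_zero hx).ne'
  constructor
  · rintro ⟨w, hw, huniq⟩ y
    have hbirkhoff (α : ℝ) : BirkhoffEps γ 0 x (α • x + y) ↔ α = -⟪w, y⟫ / γ x := by
      rw [hγ.birkhoff_iff hx, ← hw.inner_smul_add_eq_zero_iff hγx]
      exact ⟨fun ⟨w', hw', h⟩ => huniq w' hw' ▸ h, fun h => ⟨w, hw, h⟩⟩
    simp only [hbirkhoff, existsUnique_eq]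
  · intro h
    obtain ⟨w, hw, -⟩ := (hγ.birkhoff_iff hx (z := 0)).1 fun l => by simp
    refine ⟨w, hw, fun w' hw' => ext_inner_right ℝ fun y => ?_⟩
    obtain ⟨α, -, hα⟩ := h y
    have key {v : EuclideanSpace ℝ (Fin d)} (hv : IsSupportingFunctional γ x v) :
        -⟪v, y⟫ / γ x = α :=
      hα _ ((hγ.birkhoff_iff hx).2 ⟨v, hv, (hv.inner_smul_add_eq_zero_iff hγx _ y).2 rfl⟩)
    have := (key hw').trans (key hw).symm
    rwa [div_left_inj' hγx, neg_inj] at this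

theorem isSupportingHyperplane_iff (hγ : IsGauge γ) (hx : γ x = 1)
    {H : Set (EuclideanSpace ℝ (Fin d))} :
    IsSupportingHyperplane {z | γ z ≤ 1} x H ↔
      ∃ w, IsSupportingFunctional γ x w ∧ H = {y | ⟪w, y⟫ = 1} := by
  constructor
  · rintro ⟨xs, hxs, c, rfl, hxsx, hsupp⟩
    have hle := hγ.inner_le_mul_of_forall_le hsupp
    have hc : 0 < c := by
      have := hle xs
      nlinarith [real_inner_self_pos.2 hxs, hγ.1 xs]
    refine ⟨c⁻¹ • xs, ⟨fun v => ?_, ?_⟩, ?_⟩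
    · rw [real_inner_smul_left, inv_mul_le_iff₀ hc]
      exact hle v
    · rw [real_inner_smul_left, hxsx, hx, inv_mul_cancel₀ hc.ne']
    · ext y
      simp only [Set.mem_ofPred_eq, real_inner_smul_left, inv_mul_eq_one₀ hc.ne', eq_comm]
  · rintro ⟨w, ⟨hwle, hwx⟩, rfl⟩
    rw [hx] at hwx
    refine ⟨w, ?_, 1, rfl, hwx, fun z hz => (hwle z).trans hz⟩
    rintro rfl
    simp at hwx

theorem existsUnique_isSupportingHyperplane_iff (hγ : IsGauge γ) (hx : γ x = 1) :
    (∃! H, IsSupportingHyperplane {z | γ z ≤ 1} x H) ↔ ∃! w, IsSupportingFunctional γ x w := by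
  have hw_ne {w : EuclideanSpace ℝ (Fin d)} (hw : IsSupportingFunctional γ x w) : w ≠ 0 := by
    rintro rfl
    simpa [hx] using hw.2
  simp only [hγ.isSupportingHyperplane_iff hx]
  constructor
  · rintro ⟨_, ⟨w, hw, rfl⟩, huniq⟩
    exact ⟨w, hw, fun w' hw' => eq_of_setOf_inner_eq_one_eq (hw_ne hw') (huniq _ ⟨w', hw', rfl⟩)⟩
  · rintro ⟨w, hw, huniq⟩
    refine ⟨_, ⟨w, hw, rfl⟩, ?_⟩
    rintro _ ⟨w', hw', rfl⟩
    rw [huniq w' hw']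

end IsGauge

theorem smooth_iff_right_unique_general
    (γ : EuclideanSpace ℝ (Fin d) → ℝ) (hγ : IsGauge γ) :
    (∀ x : EuclideanSpace ℝ (Fin d), γ x = 1 →
      ∃! H : Set (EuclideanSpace ℝ (Fin d)),
        ∃ xs : EuclideanSpace ℝ (Fin d), xs ≠ 0 ∧ ∃ c : ℝ,
          H = {y | ⟪xs, y⟫ = c} ∧ ⟪xs, x⟫ = c ∧
          ∀ z : EuclideanSpace ℝ (Fin d), γ z ≤ 1 → ⟪xs, z⟫ ≤ c) ↔
    (∀ x y : EuclideanSpace ℝ (Fin d), x ≠ 0 →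
      ∃! α : ℝ, BirkhoffEps γ 0 x (α • x + y)) := by
  change (∀ x, γ x = 1 → ∃! H, IsSupportingHyperplane {z | γ z ≤ 1} x H) ↔ _
  constructor
  · intro hsmooth x y hx
    have hunit := hγ.map_inv_smul_self hx
    have hunique := (hγ.existsUnique_isSupportingHyperplane_iff hunit).1 (hsmooth _ hunit)
    rw [existsUnique_congr fun w => isSupportingFunctional_smul_iff hγ.2.2.1
      (inv_pos.2 (hγ.pos_of_ne_zero hx))] at hunique
    exact (hγ.existsUnique_isSupportingFunctional_iff hx).1 hunique y
  · intro hunique x hx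
    have hx0 := hγ.ne_zero_of_map_eq_one hx
    exact (hγ.existsUnique_isSupportingHyperplane_iff hx).2
      ((hγ.existsUnique_isSupportingFunctional_iff hx0).2 fun y => hunique x y hx0)

theorem smooth_iff_right_unique (hd : 2 ≤ d)
    (γ : EuclideanSpace ℝ (Fin d) → ℝ) (hγ : IsGauge γ) :
    (∀ x : EuclideanSpace ℝ (Fin d), γ x = 1 →
      ∃! H : Set (EuclideanSpace ℝ (Fin d)),
        ∃ xs : EuclideanSpace ℝ (Fin d), xs ≠ 0 ∧ ∃ c : ℝ,
          H = {y | ⟪xs, y⟫ = c} ∧ ⟪xs, x⟫ = c ∧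
          ∀ z : EuclideanSpace ℝ (Fin d), γ z ≤ 1 → ⟪xs, z⟫ ≤ c) ↔
    (∀ x y : EuclideanSpace ℝ (Fin d), x ≠ 0 →
      ∃! α : ℝ, BirkhoffEps γ 0 x (α • x + y)) :=
  smooth_iff_right_unique_general γ hγ
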